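/- arXiv:2309.03653 — 6 statements merged into one kernel-verified Lean document; each statement's English description precedes it below -/
import Mathlib

section
/- For all real numbers λ, μ ∈ [0, 1], the binary entropy-type function h(x) = -x·ln x (with the convention h(0) = 0) satisfies |h(λ) - h(μ)| ≤ 2|λ - μ| + h(|λ - μ|). -/
open Real

lemma negMulLog_add_le' {a b : ℝ} (ha : 0 ≤ a) (hb : 0 ≤ b) :
    Real.negMulLog (a + b) ≤ Real.negMulLog a + Real.negMulLog b := by
  rcases eq_or_lt_of_le ha with rfl | ha'
  · simp
  rcases eq_or_lt_of_le hb with rfl | hb'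
  · simp
  have hab : 0 < a + b := by linarith
  have h1 : -a * Real.log (a + b) ≤ -a * Real.log a := by
    have := Real.log_le_log ha' (by linarith : a ≤ a + b)
    nlinarith
  have h2 : -b * Real.log (a + b) ≤ -b * Real.log b := by
    have := Real.log_le_log hb' (by linarith : b ≤ a + b)
    nlinarith
  simp only [Real.negMulLog]
  nlinarith

lemma key (l m : ℝ) (hl : l ∈ Set.Icc (0 : ℝ) 1) (hm : m ∈ Set.Icc (0 : ℝ) 1)
    (hml : m ≤ l) :
    |Real.negMulLog l - Real.negMulLog m| ≤ 2 * |l - m| + Real.negMulLog |l - m| := by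
  obtain ⟨hl0, hl1⟩ := hl
  obtain ⟨hm0, hm1⟩ := hm
  set d := l - m with hd
  have hd0 : 0 ≤ d := by linarith
  rw [abs_of_nonneg hd0]
  have hdnn : 0 ≤ Real.negMulLog d := Real.negMulLog_nonneg hd0 (by linarith)
  rw [abs_sub_le_iff]
  constructor
  · -- h l - h m ≤ h d ≤ 2d + h d
    have : Real.negMulLog l ≤ Real.negMulLog m + Real.negMulLog d := by
      have := negMulLog_add_le' hm0 hd0
      simpa [hd] using this
    linarith
  · -- h m - h l ≤ d
    rcases eq_or_lt_of_le hm0 with rfl | hm'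
    · simp only [Real.negMulLog_zero]
      have : d = l := by simp [hd]
      rw [this] at hdnn ⊢
      linarith
    · have hl' : 0 < l := lt_of_lt_of_le hm' hml
      have hlog : Real.log l - Real.log m ≤ l / m - 1 := by
        have := Real.log_le_sub_one_of_pos (div_pos hl' hm')
        rwa [Real.log_div hl'.ne' hm'.ne'] at this
      have hlogl : Real.log l ≤ 0 := Real.log_nonpos hl0 hl1
      have h1 : m * (Real.log l - Real.log m) ≤ d := by
        have := mul_le_mul_of_nonneg_left hlog hm0
        have h2 : m * (l / m - 1) = l - m := by field_simp
        linarith [this, h2 ▸ this]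
      have h3 : d * Real.log l ≤ 0 := mul_nonpos_of_nonneg_of_nonpos hd0 hlogl
      have expand : Real.negMulLog m - Real.negMulLog l
          = m * (Real.log l - Real.log m) + d * Real.log l := by
        simp only [Real.negMulLog, hd]; ring
      linarith

theorem stmt_3 (l m : ℝ) (hl : l ∈ Set.Icc (0 : ℝ) 1) (hm : m ∈ Set.Icc (0 : ℝ) 1) :
    |Real.negMulLog l - Real.negMulLog m| ≤ 2 * |l - m| + Real.negMulLog |l - m| := by
  rcases le_total m l with h | h
  · exact key l m hl hm h
  · rw [abs_sub_comm, abs_sub_comm l m]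
    exact key m l hm hl h
end

section
/- (Lidskii–Kato eigenvalue perturbation inequality.) Let A and B be Hermitian d×d complex matrices, let α_1 ≥ α_2 ≥ ... ≥ α_d and β_1 ≥ β_2 ≥ ... ≥ β_d be their eigenvalues listed in decreasing order, and let γ_1, ..., γ_d be the eigenvalues of C = A - B. Then ∑_{k=1}^{d} |β_k - α_k|² ≤ ∑_{k=1}^{d} |γ_k|². -/
/-! The Hoffman–Wielandt argument. Diagonalize `A = U diag(α) U*` and `B = V diag(β) V*` with the
eigenvalues in the prescribed order. Since the Frobenius norm is unitarily invariant,
`‖A - B‖² = ∑ᵢⱼ (αᵢ - βⱼ)² |Wᵢⱼ|²` with `W = U* V`, while `‖A - B‖² = ∑ₖ γₖ²` because `A - B` is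
Hermitian. The matrix `(|Wᵢⱼ|²)` is doubly stochastic, so by Birkhoff's theorem this linear
expression in it is minimized at a permutation matrix, and by the rearrangement inequality the
best permutation pairs the two decreasing sequences index by index. -/

open Matrix Finset

variable {ι : Type*} [Fintype ι]

theorem Monovary.sum_sq_sub_le_sum_sq_sub_comp_perm {f g : ι → ℝ} (hfg : Monovary f g)
    (σ : Equiv.Perm ι) : ∑ i, (f i - g i) ^ 2 ≤ ∑ i, (f i - g (σ i)) ^ 2 := by
  have expand : ∀ h : ι → ℝ,
      ∑ i, (f i - h i) ^ 2 = ∑ i, f i ^ 2 + ∑ i, h i ^ 2 - 2 * ∑ i, f i * h i := by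
    intro h
    simp only [sub_sq, sum_sub_distrib, sum_add_distrib, mul_sum]
    ring_nf
  have hsq : ∑ i, g (σ i) ^ 2 = ∑ i, g i ^ 2 := Equiv.sum_comp σ (fun i => g i ^ 2)
  rw [expand g, expand (fun i => g (σ i)), hsq]
  linarith [hfg.sum_mul_comp_perm_le_sum_mul (σ := σ)]

theorem Monovary.sum_sq_sub_le_of_mem_doublyStochastic [DecidableEq ι] {f g : ι → ℝ}
    (hfg : Monovary f g) {S : Matrix ι ι ℝ} (hS : S ∈ doublyStochastic ℝ ι) :
    ∑ i, (f i - g i) ^ 2 ≤ ∑ i, ∑ j, (f i - g j) ^ 2 * S i j := by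
  let cost : Matrix ι ι ℝ →ₗ[ℝ] ℝ :=
    { toFun := fun M => ∑ i, ∑ j, (f i - g j) ^ 2 * M i j
      map_add' := fun M N => by simp only [Matrix.add_apply, mul_add, sum_add_distrib]
      map_smul' := fun c M => by
        simp only [Matrix.smul_apply, smul_eq_mul, mul_sum, RingHom.id_apply, mul_left_comm] }
  rw [← SetLike.mem_coe, doublyStochastic_eq_convexHull_permMatrix] at hS
  obtain ⟨_, ⟨σ, rfl⟩, hσ⟩ :=
    (cost.concaveOn convex_univ).exists_le_of_mem_convexHull (Set.subset_univ _) hS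
  refine (hfg.sum_sq_sub_le_sum_sq_sub_comp_perm σ).trans (le_of_eq_of_le ?_ hσ)
  simp [cost, Equiv.Perm.permMatrix, PEquiv.toMatrix_apply]

variable {𝕜 : Type*} [RCLike 𝕜] {m n : Type*} [Fintype m] [Fintype n]

theorem Matrix.re_trace_mul_conjTranspose_self (N : Matrix m n 𝕜) :
    RCLike.re (N * Nᴴ).trace = ∑ i, ∑ j, ‖N i j‖ ^ 2 := by
  simp [trace, mul_apply, RCLike.mul_conj]

variable [DecidableEq m] [DecidableEq n]

theorem Matrix.sum_norm_sq_unitary_mul_mul_star {U : Matrix m m 𝕜} {V : Matrix n n 𝕜}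
    (hU : U ∈ unitaryGroup m 𝕜) (hV : V ∈ unitaryGroup n 𝕜) (N : Matrix m n 𝕜) :
    ∑ i, ∑ j, ‖(U * N * star V) i j‖ ^ 2 = ∑ i, ∑ j, ‖N i j‖ ^ 2 := by
  simp only [← re_trace_mul_conjTranspose_self, conjTranspose_mul, ← star_eq_conjTranspose,
    star_star]
  congr 1
  calc (U * N * star V * (V * (Nᴴ * star U))).trace
      = (U * (N * Nᴴ) * star U).trace := by
        simp only [Matrix.mul_assoc, ← Matrix.mul_assoc (star V), mem_unitaryGroup_iff'.mp hV,
          Matrix.one_mul]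
    _ = (N * Nᴴ).trace := by
        rw [trace_mul_cycle, ← Matrix.mul_assoc, mem_unitaryGroup_iff'.mp hU, Matrix.one_mul]

theorem Matrix.IsHermitian.sum_norm_sq_eq_sum_eigenvalues_sq {M : Matrix n n 𝕜}
    (hM : M.IsHermitian) :
    ∑ i, ∑ j, ‖M i j‖ ^ 2 = ∑ i, hM.eigenvalues i ^ 2 := by
  conv_lhs => rw [hM.spectral_theorem, Unitary.conjStarAlgAut_apply]
  rw [sum_norm_sq_unitary_mul_mul_star hM.eigenvectorUnitary.2 hM.eigenvectorUnitary.2]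
  simp [diagonal_apply, apply_ite (‖·‖ ^ 2)]

theorem Matrix.norm_sq_mem_doublyStochastic {W : Matrix n n 𝕜} (hW : W ∈ unitaryGroup n 𝕜) :
    of (fun i j => ‖W i j‖ ^ 2) ∈ doublyStochastic ℝ n := by
  have hrow : ∀ i, ∑ j, ‖W i j‖ ^ 2 = 1 := fun i => by
    have := congr_fun₂ (mem_unitaryGroup_iff.mp hW) i i
    simp only [mul_apply, star_apply, RCLike.star_def, RCLike.mul_conj, one_apply_eq] at this
    exact_mod_cast this
  have hcol : ∀ j, ∑ i, ‖W i j‖ ^ 2 = 1 := fun j => by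
    have := congr_fun₂ (mem_unitaryGroup_iff'.mp hW) j j
    simp only [mul_apply, star_apply, RCLike.star_def, RCLike.conj_mul, one_apply_eq] at this
    exact_mod_cast this
  exact mem_doublyStochastic_iff_sum.mpr ⟨fun _ _ => sq_nonneg _, hrow, hcol⟩

theorem Matrix.IsHermitian.exists_unitary_eq_mul_diagonal_mul_star {A : Matrix n n 𝕜}
    (hA : A.IsHermitian) {α : n → ℝ} (hα : ∃ e : Equiv.Perm n, α = hA.eigenvalues ∘ e) :
    ∃ U ∈ unitaryGroup n 𝕜, A = U * diagonal (fun i => (α i : 𝕜)) * star U := by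
  obtain ⟨e, rfl⟩ := hα
  set U₀ : Matrix n n 𝕜 := (hA.eigenvectorUnitary : Matrix n n 𝕜)
  refine ⟨U₀.submatrix id e, ?_, ?_⟩
  · rw [mem_unitaryGroup_iff, star_eq_conjTranspose, conjTranspose_submatrix,
      submatrix_mul_equiv _ _ _ e, ← star_eq_conjTranspose,
      mem_unitaryGroup_iff.mp hA.eigenvectorUnitary.2]
    rfl
  · rw [star_eq_conjTranspose, conjTranspose_submatrix, ← star_eq_conjTranspose,
      show diagonal (fun i => ((hA.eigenvalues ∘ e) i : 𝕜))
        = (diagonal (RCLike.ofReal ∘ hA.eigenvalues)).submatrix e e from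
          (submatrix_diagonal_equiv (RCLike.ofReal ∘ hA.eigenvalues) e).symm,
      submatrix_mul_equiv _ _ _ e, submatrix_mul_equiv _ _ _ e]
    exact hA.spectral_theorem

theorem Matrix.sum_norm_sq_sub_unitary_conj_diagonal {U V : Matrix n n 𝕜} (hU : U ∈ unitaryGroup n 𝕜)
    (hV : V ∈ unitaryGroup n 𝕜) (a b : n → ℝ) :
    ∑ i, ∑ j, ‖(U * diagonal (fun i => (a i : 𝕜)) * star U
        - V * diagonal (fun i => (b i : 𝕜)) * star V) i j‖ ^ 2
      = ∑ i, ∑ j, (a i - b j) ^ 2 * ‖(star U * V) i j‖ ^ 2 := by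
  set W := star U * V
  have hfactor :
      U * diagonal (fun i => (a i : 𝕜)) * star U - V * diagonal (fun i => (b i : 𝕜)) * star V
        = U * (diagonal (fun i => (a i : 𝕜)) * W - W * diagonal (fun i => (b i : 𝕜))) * star V := by
    rw [Matrix.mul_sub, Matrix.sub_mul]
    congr 1
    · simp only [W, Matrix.mul_assoc, mem_unitaryGroup_iff.mp hV, Matrix.mul_one]
    · simp only [W, ← Matrix.mul_assoc, mem_unitaryGroup_iff.mp hU, Matrix.one_mul]
  rw [hfactor, sum_norm_sq_unitary_mul_mul_star hU hV]
  refine sum_congr rfl fun i _ => sum_congr rfl fun j _ => ?_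
  rw [sub_apply, diagonal_mul, mul_diagonal, mul_comm (W i j), ← sub_mul, ← RCLike.ofReal_sub,
    norm_mul, mul_pow, RCLike.norm_ofReal, sq_abs]

theorem stmt_4 (d : ℕ) (A B : Matrix (Fin d) (Fin d) ℂ)
    (hA : A.IsHermitian) (hB : B.IsHermitian) (hC : (A - B).IsHermitian)
    (α β : Fin d → ℝ)
    (hαmono : Antitone α) (hβmono : Antitone β)
    (hα : ∃ e : Equiv.Perm (Fin d), α = hA.eigenvalues ∘ e)
    (hβ : ∃ e : Equiv.Perm (Fin d), β = hB.eigenvalues ∘ e) :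
    ∑ k, |β k - α k| ^ 2 ≤ ∑ k, |hC.eigenvalues k| ^ 2 := by
  obtain ⟨U, hU, hAU⟩ := hA.exists_unitary_eq_mul_diagonal_mul_star hα
  obtain ⟨V, hV, hBV⟩ := hB.exists_unitary_eq_mul_diagonal_mul_star hβ
  calc ∑ k, |β k - α k| ^ 2 = ∑ k, (α k - β k) ^ 2 :=
        sum_congr rfl fun k _ => by rw [sq_abs, ← neg_sub, neg_sq]
    _ ≤ ∑ i, ∑ j, (α i - β j) ^ 2 * ‖(star U * V) i j‖ ^ 2 :=
      (hαmono.monovary hβmono).sum_sq_sub_le_of_mem_doublyStochastic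
        (norm_sq_mem_doublyStochastic (mul_mem (Unitary.star_mem hU) hV))
    _ = ∑ i, ∑ j, ‖(A - B) i j‖ ^ 2 := by rw [hAU, hBV, sum_norm_sq_sub_unitary_conj_diagonal hU hV]
    _ = ∑ k, |hC.eigenvalues k| ^ 2 := by
      simp only [hC.sum_norm_sq_eq_sum_eigenvalues_sq, sq_abs]
end

section
/- (Fannes-type continuity bound for von Neumann entropy.) Let d ≥ 1 and let ρ and σ be d×d density matrices. Let ε be a real number with 0 < ε ≤ e/√d, and suppose ‖ρ - σ‖ ≤ ε in the Frobenius norm. Then |S(ρ) - S(σ)| ≤ d·(2√d·ε - √d·ε·ln(√d·ε)). -/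
open Matrix
open scoped ComplexOrder

/-- The Frobenius (Hilbert–Schmidt) norm of a complex matrix. -/
noncomputable def frobNorm {d : ℕ} (M : Matrix (Fin d) (Fin d) ℂ) : ℝ :=
  Real.sqrt ((Mᴴ * M).trace.re)

/-- The von Neumann entropy of a Hermitian matrix: `S(ρ) = ∑ₖ -λₖ ln λₖ` where the `λₖ`
are the real eigenvalues (counted with multiplicity), with the convention `0 ln 0 = 0`.
For non-Hermitian matrices the value is defined to be `0`. -/
noncomputable def vnEntropy {d : ℕ} (ρ : Matrix (Fin d) (Fin d) ℂ) : ℝ :=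
  if h : ρ.IsHermitian then ∑ k, Real.negMulLog (h.eigenvalues k) else 0

/-!
Weyl's perturbation inequality: if `re ⟪T x, x⟫ ≤ re ⟪S x, x⟫ + c ‖x‖²` for all `x`, then the
`k`-th largest eigenvalue of `T` is at most that of `S` plus `c`, because the span of the top
`k + 1` eigenvectors of `T` meets the span of the bottom `n - k` eigenvectors of `S`. Since the
operator norm is bounded by the Frobenius norm, the sorted eigenvalues of `ρ` and `σ` differ
pairwise by at most `ε ≤ t := √d ε`, and all lie in `[0, 1]`. On `[0, 1]` the function
`η x = -x ln x` satisfies `|η x - η y| ≤ 2t + η t` whenever `|x - y| ≤ t ≤ e`: subadditivity of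
`η` bounds `η x - η y` by `η (x - y)`, and monotonicity of `η x + x` bounds `η y - η x` by
`x - y`. Summing over the `d` eigenvalues gives the bound.
-/

namespace Real

theorem negMulLog_add_le {a b : ℝ} (ha : 0 ≤ a) (hb : 0 ≤ b) :
    negMulLog (a + b) ≤ negMulLog a + negMulLog b := by
  rcases ha.eq_or_lt with rfl | ha
  · simp
  rcases hb.eq_or_lt with rfl | hb
  · simp
  have hla := log_le_log ha (le_add_of_nonneg_right hb.le)
  have hlb := log_le_log hb (le_add_of_nonneg_left ha.le)
  simp only [negMulLog]
  nlinarith [mul_le_mul_of_nonneg_left hla ha.le, mul_le_mul_of_nonneg_left hlb hb.le]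

theorem monotoneOn_negMulLog_add_self : MonotoneOn (fun x => negMulLog x + x) (Set.Icc 0 1) := by
  have hderiv {x : ℝ} (hx : x ∈ Set.Ioo (0 : ℝ) 1) :
      HasDerivAt (fun x => negMulLog x + x) (-log x - 1 + 1) x :=
    (hasDerivAt_negMulLog hx.1.ne').add (hasDerivAt_id x)
  refine monotoneOn_of_deriv_nonneg (convex_Icc 0 1) (by fun_prop) ?_ ?_ <;> rw [interior_Icc]
  · exact fun x hx => (hderiv hx).differentiableAt.differentiableWithinAt
  · intro x hx
    rw [(hderiv hx).deriv]
    linarith [log_nonpos hx.1.le hx.2.le]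

theorem neg_le_negMulLog {t : ℝ} (ht : 0 ≤ t) (hte : t ≤ exp 1) : -t ≤ negMulLog t := by
  rcases ht.eq_or_lt with rfl | ht
  · simp
  have := (log_le_iff_le_exp ht).mpr hte
  simp only [negMulLog]
  nlinarith

theorem negMulLog_le_two_mul_add_negMulLog {δ t : ℝ} (hδ : 0 ≤ δ) (hδt : δ ≤ t)
    (hte : t ≤ exp 1) : negMulLog δ ≤ 2 * t + negMulLog t := by
  rcases le_or_gt t 1 with ht1 | ht1
  · have := monotoneOn_negMulLog_add_self ⟨hδ, hδt.trans ht1⟩ ⟨hδ.trans hδt, ht1⟩ hδt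
    dsimp only at this
    linarith
  · have := negMulLog_le_one_sub_self hδ
    have := neg_le_negMulLog (by linarith) hte
    linarith

theorem abs_negMulLog_sub_le {x y t : ℝ} (hx0 : 0 ≤ x) (hx1 : x ≤ 1) (hy0 : 0 ≤ y) (hy1 : y ≤ 1)
    (hxy : |x - y| ≤ t) (hte : t ≤ exp 1) :
    |negMulLog x - negMulLog y| ≤ 2 * t + negMulLog t := by
  wlog hyx : y ≤ x generalizing x y
  · rw [abs_sub_comm]
    exact this hy0 hy1 hx0 hx1 (by rwa [abs_sub_comm]) (le_of_not_ge hyx)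
  have hδ : 0 ≤ x - y := sub_nonneg.mpr hyx
  rw [abs_of_nonneg hδ] at hxy
  have hsub : negMulLog x ≤ negMulLog y + negMulLog (x - y) := by
    simpa using negMulLog_add_le hy0 hδ
  have hmono := monotoneOn_negMulLog_add_self ⟨hy0, hy1⟩ ⟨hx0, hx1⟩ hyx
  dsimp only at hmono
  have hδη := negMulLog_le_two_mul_add_negMulLog hδ hxy hte
  have ht := neg_le_negMulLog (hδ.trans hxy) hte
  rw [abs_le]
  constructor <;> linarith

end Real

open scoped InnerProductSpace

theorem Orthonormal.inner_eq_zero_of_mem_span_image {𝕜 E ι : Type*} [RCLike 𝕜]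
    [NormedAddCommGroup E] [InnerProductSpace 𝕜 E] {v : ι → E} (hv : Orthonormal 𝕜 v)
    {s : Set ι} {x : E} (hx : x ∈ Submodule.span 𝕜 (v '' s)) {i : ι} (hi : i ∉ s) :
    ⟪x, v i⟫_𝕜 = 0 := by
  obtain ⟨l, hl, rfl⟩ := (Finsupp.mem_span_image_iff_linearCombination 𝕜).mp hx
  exact hv.inner_finsupp_eq_zero hi hl

namespace LinearMap.IsSymmetric

open Module RCLike

variable {𝕜 E : Type*} [RCLike 𝕜] [NormedAddCommGroup E] [InnerProductSpace 𝕜 E]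
  [FiniteDimensional 𝕜 E] {T S : E →ₗ[𝕜] E} {n : ℕ}

theorem re_inner_apply_self_eq_sum (hT : T.IsSymmetric) (hn : finrank 𝕜 E = n) (x : E) :
    re ⟪T x, x⟫_𝕜 = ∑ i, hT.eigenvalues hn i * ‖⟪x, hT.eigenvectorBasis hn i⟫_𝕜‖ ^ 2 := by
  rw [← (hT.eigenvectorBasis hn).sum_inner_mul_inner, map_sum]
  refine Finset.sum_congr rfl fun i _ => ?_
  rw [hT, hT.apply_eigenvectorBasis, inner_smul_right, ← inner_conj_symm x, mul_assoc,
    RCLike.conj_mul, RCLike.norm_conj, ← RCLike.ofReal_pow, ← RCLike.ofReal_mul, RCLike.ofReal_re]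

theorem re_inner_apply_self_le_of_mem_span (hT : T.IsSymmetric) (hn : finrank 𝕜 E = n)
    {s : Set (Fin n)} {c : ℝ} (hc : ∀ i ∈ s, hT.eigenvalues hn i ≤ c) {x : E}
    (hx : x ∈ Submodule.span 𝕜 (hT.eigenvectorBasis hn '' s)) :
    re ⟪T x, x⟫_𝕜 ≤ c * ‖x‖ ^ 2 := by
  rw [hT.re_inner_apply_self_eq_sum hn, ← (hT.eigenvectorBasis hn).sum_sq_norm_inner_left,
    Finset.mul_sum]
  refine Finset.sum_le_sum fun i _ => ?_
  by_cases hi : i ∈ s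
  · exact mul_le_mul_of_nonneg_right (hc i hi) (sq_nonneg _)
  · simp [(hT.eigenvectorBasis hn).orthonormal.inner_eq_zero_of_mem_span_image hx hi]

theorem le_re_inner_apply_self_of_mem_span (hT : T.IsSymmetric) (hn : finrank 𝕜 E = n)
    {s : Set (Fin n)} {c : ℝ} (hc : ∀ i ∈ s, c ≤ hT.eigenvalues hn i) {x : E}
    (hx : x ∈ Submodule.span 𝕜 (hT.eigenvectorBasis hn '' s)) :
    c * ‖x‖ ^ 2 ≤ re ⟪T x, x⟫_𝕜 := by
  rw [hT.re_inner_apply_self_eq_sum hn, ← (hT.eigenvectorBasis hn).sum_sq_norm_inner_left,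
    Finset.mul_sum]
  refine Finset.sum_le_sum fun i _ => ?_
  by_cases hi : i ∈ s
  · exact mul_le_mul_of_nonneg_right (hc i hi) (sq_nonneg _)
  · simp [(hT.eigenvectorBasis hn).orthonormal.inner_eq_zero_of_mem_span_image hx hi]

theorem finrank_span_eigenvectorBasis_image (hT : T.IsSymmetric) (hn : finrank 𝕜 E = n)
    (s : Finset (Fin n)) :
    finrank 𝕜 (Submodule.span 𝕜 (hT.eigenvectorBasis hn '' s)) = s.card := by
  rw [Set.image_eq_range]
  exact (finrank_span_eq_card ((hT.eigenvectorBasis hn).orthonormal.linearIndependent.comp _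
    Subtype.val_injective)).trans (Fintype.card_coe s)

theorem eigenvalues_le_add_of_re_inner_le (hT : T.IsSymmetric) (hS : S.IsSymmetric)
    (hn : finrank 𝕜 E = n) {c : ℝ} (h : ∀ x, re ⟪T x, x⟫_𝕜 ≤ re ⟪S x, x⟫_𝕜 + c * ‖x‖ ^ 2)
    (k : Fin n) : hT.eigenvalues hn k ≤ hS.eigenvalues hn k + c := by
  set U := Submodule.span 𝕜 (hT.eigenvectorBasis hn '' ↑(Finset.Iic k))
  set V := Submodule.span 𝕜 (hS.eigenvectorBasis hn '' ↑(Finset.Ici k))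
  have hUV : ¬ Disjoint U V := by
    intro hdisj
    have := Submodule.finrank_add_finrank_le_of_disjoint hdisj
    rw [hT.finrank_span_eigenvectorBasis_image, hS.finrank_span_eigenvectorBasis_image,
      Fin.card_Iic, Fin.card_Ici, hn] at this
    omega
  obtain ⟨x, hxU, hxV, hx⟩ : ∃ x ∈ U, x ∈ V ∧ x ≠ 0 := by
    simpa [Submodule.disjoint_def] using hUV
  have hTx := hT.le_re_inner_apply_self_of_mem_span hn
    (fun i hi => hT.eigenvalues_antitone hn (by simpa using hi)) hxU
  have hSx := hS.re_inner_apply_self_le_of_mem_span hn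
    (fun i hi => hS.eigenvalues_antitone hn (by simpa using hi)) hxV
  refine le_of_mul_le_mul_right ?_ (by positivity : 0 < ‖x‖ ^ 2)
  linarith [h x]

theorem abs_eigenvalues_sub_le (hT : T.IsSymmetric) (hS : S.IsSymmetric)
    (hn : finrank 𝕜 E = n) {c : ℝ} (h : ∀ x, |re ⟪T x, x⟫_𝕜 - re ⟪S x, x⟫_𝕜| ≤ c * ‖x‖ ^ 2)
    (k : Fin n) : |hT.eigenvalues hn k - hS.eigenvalues hn k| ≤ c := by
  have hTS := hT.eigenvalues_le_add_of_re_inner_le hS hn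
    (fun x => by linarith [(abs_le.mp (h x)).2]) k
  have hST := hS.eigenvalues_le_add_of_re_inner_le hT hn
    (fun x => by linarith [(abs_le.mp (h x)).1]) k
  exact abs_le.mpr ⟨by linarith, by linarith⟩

end LinearMap.IsSymmetric

theorem Matrix.re_trace_conjTranspose_mul_self {m n : Type*} [Fintype m] [Fintype n]
    (M : Matrix m n ℂ) : (Mᴴ * M).trace.re = ∑ i, ∑ j, ‖M i j‖ ^ 2 := by
  simp only [trace, diag, mul_apply, conjTranspose_apply, Complex.re_sum]
  rw [Finset.sum_comm]
  congr! 2 with i _ j _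
  rw [Complex.star_def, Complex.conj_mul', ← Complex.ofReal_pow, Complex.ofReal_re]

section frobenius

attribute [local instance] Matrix.frobeniusNormedAddCommGroup

theorem frobNorm_eq_frobenius_norm {d : ℕ} (M : Matrix (Fin d) (Fin d) ℂ) :
    frobNorm M = ‖M‖ := by
  rw [frobNorm, frobenius_norm_def, re_trace_conjTranspose_mul_self, Real.sqrt_eq_rpow]
  norm_cast

theorem norm_toEuclideanLin_le_frobNorm {d : ℕ} (M : Matrix (Fin d) (Fin d) ℂ)
    (x : EuclideanSpace ℂ (Fin d)) : ‖toEuclideanLin M x‖ ≤ frobNorm M * ‖x‖ := by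
  rw [frobNorm_eq_frobenius_norm, toLpLin_apply, ← frobenius_norm_replicateCol (ι := Unit),
    replicateCol_mulVec, ← frobenius_norm_replicateCol (ι := Unit) x.ofLp]
  exact frobenius_norm_mul _ _

end frobenius

theorem abs_re_inner_toEuclideanLin_sub_le {d : ℕ} (A B : Matrix (Fin d) (Fin d) ℂ)
    (x : EuclideanSpace ℂ (Fin d)) :
    |(⟪toEuclideanLin A x, x⟫_ℂ).re - (⟪toEuclideanLin B x, x⟫_ℂ).re| ≤
      frobNorm (A - B) * ‖x‖ ^ 2 :=
  calc |(⟪toEuclideanLin A x, x⟫_ℂ).re - (⟪toEuclideanLin B x, x⟫_ℂ).re|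
      = |(⟪toEuclideanLin (A - B) x, x⟫_ℂ).re| := by
        rw [map_sub, LinearMap.sub_apply, inner_sub_left, Complex.sub_re]
    _ ≤ ‖toEuclideanLin (A - B) x‖ * ‖x‖ :=
        (Complex.abs_re_le_norm _).trans (norm_inner_le_norm _ _)
    _ ≤ frobNorm (A - B) * ‖x‖ * ‖x‖ := by
        gcongr
        exact norm_toEuclideanLin_le_frobNorm _ _
    _ = frobNorm (A - B) * ‖x‖ ^ 2 := by ring

theorem Matrix.IsHermitian.abs_eigenvalues₀_sub_le {d : ℕ} {A B : Matrix (Fin d) (Fin d) ℂ}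
    (hA : A.IsHermitian) (hB : B.IsHermitian) {c : ℝ} (hAB : frobNorm (A - B) ≤ c)
    (k : Fin (Fintype.card (Fin d))) : |hA.eigenvalues₀ k - hB.eigenvalues₀ k| ≤ c :=
  LinearMap.IsSymmetric.abs_eigenvalues_sub_le _ _ _ (fun x =>
    (abs_re_inner_toEuclideanLin_sub_le A B x).trans (by gcongr)) k

theorem Matrix.PosSemidef.eigenvalues₀_mem_Icc {𝕜 n : Type*} [RCLike 𝕜] [Fintype n]
    [DecidableEq n] {A : Matrix n n 𝕜} (hA : A.PosSemidef) (htr : A.trace = 1)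
    (k : Fin (Fintype.card n)) : hA.1.eigenvalues₀ k ∈ Set.Icc 0 1 := by
  have hsum : ∑ i, hA.1.eigenvalues i = 1 := by
    have := hA.1.trace_eq_sum_eigenvalues
    rw [htr] at this
    exact_mod_cast this.symm
  have hk : hA.1.eigenvalues₀ k =
      hA.1.eigenvalues (Fintype.equivOfCardEq (Fintype.card_fin _) k) := by
    simp [IsHermitian.eigenvalues]
  rw [hk, ← hsum]
  exact ⟨hA.eigenvalues_nonneg _,
    Finset.single_le_sum (fun i _ => hA.eigenvalues_nonneg i) (Finset.mem_univ _)⟩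

/- `eigenvalues` is `eigenvalues₀` reindexed along an arbitrary equivalence, so only
`eigenvalues₀` is sorted, which Weyl's inequality needs. -/
theorem vnEntropy_eq_sum_eigenvalues₀ {d : ℕ} {A : Matrix (Fin d) (Fin d) ℂ}
    (hA : A.IsHermitian) :
    vnEntropy A = ∑ k, Real.negMulLog (hA.eigenvalues₀ k) := by
  rw [vnEntropy, dif_pos hA]
  exact Equiv.sum_comp (Fintype.equivOfCardEq (Fintype.card_fin _)).symm
    (fun k => Real.negMulLog (hA.eigenvalues₀ k))

theorem abs_vnEntropy_sub_le {d : ℕ} {ρ σ : Matrix (Fin d) (Fin d) ℂ}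
    (hρ : ρ.PosSemidef) (hρtr : ρ.trace = 1) (hσ : σ.PosSemidef) (hσtr : σ.trace = 1)
    {t : ℝ} (hdist : frobNorm (ρ - σ) ≤ t) (hte : t ≤ Real.exp 1) :
    |vnEntropy ρ - vnEntropy σ| ≤ d * (2 * t + Real.negMulLog t) := by
  rw [vnEntropy_eq_sum_eigenvalues₀ hρ.1, vnEntropy_eq_sum_eigenvalues₀ hσ.1,
    ← Finset.sum_sub_distrib]
  calc _ ≤ ∑ k, |Real.negMulLog (hρ.1.eigenvalues₀ k) - Real.negMulLog (hσ.1.eigenvalues₀ k)| :=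
        Finset.abs_sum_le_sum_abs _ _
    _ ≤ ∑ _k : Fin (Fintype.card (Fin d)), (2 * t + Real.negMulLog t) := by
        gcongr with k
        obtain ⟨hρ0, hρ1⟩ := hρ.eigenvalues₀_mem_Icc hρtr k
        obtain ⟨hσ0, hσ1⟩ := hσ.eigenvalues₀_mem_Icc hσtr k
        exact Real.abs_negMulLog_sub_le hρ0 hρ1 hσ0 hσ1
          (hρ.1.abs_eigenvalues₀_sub_le hσ.1 hdist k) hte
    _ = d * (2 * t + Real.negMulLog t) := by
        rw [Finset.sum_const, Finset.card_univ, Fintype.card_fin, Fintype.card_fin, nsmul_eq_mul]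

theorem stmt_6 (d : ℕ) (hd : 1 ≤ d) (ρ σ : Matrix (Fin d) (Fin d) ℂ)
    (hρ : ρ.PosSemidef) (hρtr : ρ.trace = 1)
    (hσ : σ.PosSemidef) (hσtr : σ.trace = 1)
    (ε : ℝ) (hε : 0 < ε) (hεd : ε ≤ Real.exp 1 / Real.sqrt d)
    (hdist : frobNorm (ρ - σ) ≤ ε) :
    |vnEntropy ρ - vnEntropy σ| ≤
      d * (2 * Real.sqrt d * ε - Real.sqrt d * ε * Real.log (Real.sqrt d * ε)) := by
  have hsqrt : 1 ≤ Real.sqrt d := Real.one_le_sqrt.mpr (by exact_mod_cast hd)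
  have hdist' : frobNorm (ρ - σ) ≤ Real.sqrt d * ε :=
    hdist.trans (le_mul_of_one_le_left hε.le hsqrt)
  have hte : Real.sqrt d * ε ≤ Real.exp 1 := by
    rwa [le_div_iff₀ (by positivity), mul_comm] at hεd
  calc |vnEntropy ρ - vnEntropy σ|
      ≤ d * (2 * (Real.sqrt d * ε) + Real.negMulLog (Real.sqrt d * ε)) :=
        abs_vnEntropy_sub_le hρ hρtr hσ hσtr hdist' hte
    _ = _ := by rw [Real.negMulLog]; ring
end

section
/- (Relative entropy decomposition bound.) Let σ and ρ be d×d density matrices that are both positive definite. Then the quantum relative entropy satisfies S(σ‖ρ) ≤ |S(σ) - S(ρ)| + ‖ρ - σ‖·‖ln ρ‖, where the norms are Frobenius norms. -/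
/-!
Writing `σ ln ρ = ρ ln ρ - (ρ - σ) ln ρ` gives the exact identity
`S(σ‖ρ) = S(ρ) - S(σ) + Re tr((ρ - σ) ln ρ)`, since `Re tr(A ln A) = -S(A)` for Hermitian `A`.
The first two terms are at most `|S(σ) - S(ρ)|`, and the last is a Hilbert–Schmidt inner product
`⟪ρ - σ, ln ρ⟫` (as `ρ - σ` is Hermitian), bounded by Cauchy–Schwarz.
-/

open Matrix
open scoped ComplexOrder

/-- The matrix logarithm obtained via the continuous functional calculus. -/
noncomputable def matLog {d : ℕ} (ρ : Matrix (Fin d) (Fin d) ℂ) : Matrix (Fin d) (Fin d) ℂ :=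
  cfc Real.log ρ

/-- The quantum relative entropy `S(σ‖ρ) = Re tr (σ ln σ - σ ln ρ)`. -/
noncomputable def relEntropy {d : ℕ} (σ ρ : Matrix (Fin d) (Fin d) ℂ) : ℝ :=
  ((σ * matLog σ - σ * matLog ρ).trace).re

namespace Matrix

variable {n : Type*} [Fintype n]

noncomputable def toEuclideanSpace (M : Matrix n n ℂ) : EuclideanSpace ℂ (n × n) :=
  WithLp.toLp 2 fun p => M p.1 p.2

lemma trace_conjTranspose_mul_eq_inner (A B : Matrix n n ℂ) :
    (Aᴴ * B).trace = inner ℂ A.toEuclideanSpace B.toEuclideanSpace := by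
  simp only [toEuclideanSpace, PiLp.inner_apply, trace, diag, mul_apply, Fintype.sum_prod_type,
    conjTranspose_apply, RCLike.inner_apply]
  rw [Finset.sum_comm]
  simp [mul_comm]

variable [DecidableEq n]

lemma IsHermitian.trace_cfc {A : Matrix n n ℂ} (hA : A.IsHermitian) (f : ℝ → ℝ) :
    (cfc f A).trace = ∑ i, (f (hA.eigenvalues i) : ℂ) := by
  rw [hA.cfc_eq, IsHermitian.cfc, Unitary.conjStarAlgAut_apply, trace_mul_cycle,
    Unitary.coe_star_mul_self, one_mul, trace_diagonal]
  rfl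

lemma IsHermitian.mul_cfc_log {A : Matrix n n ℂ} (hA : A.IsHermitian) :
    A * cfc Real.log A = -cfc Real.negMulLog A := by
  have hfin := A.finite_real_spectrum
  rw [show Real.negMulLog = fun x => -(x * Real.log x) from funext fun x => by simp [Real.negMulLog],
    cfc_neg, cfc_mul _ _ A (hfin.continuousOn _) (hfin.continuousOn _), cfc_id' ℝ A hA.isSelfAdjoint, neg_neg]

end Matrix

lemma frobNorm_eq_norm_toEuclideanSpace {d : ℕ} (M : Matrix (Fin d) (Fin d) ℂ) :
    frobNorm M = ‖M.toEuclideanSpace‖ := by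
  rw [frobNorm, trace_conjTranspose_mul_eq_inner, inner_self_eq_norm_sq_to_K]
  norm_cast
  exact Real.sqrt_sq (norm_nonneg _)

lemma re_trace_conjTranspose_mul_le_frobNorm_mul {d : ℕ} (A B : Matrix (Fin d) (Fin d) ℂ) :
    (Aᴴ * B).trace.re ≤ frobNorm A * frobNorm B := by
  rw [trace_conjTranspose_mul_eq_inner, frobNorm_eq_norm_toEuclideanSpace,
    frobNorm_eq_norm_toEuclideanSpace]
  exact re_inner_le_norm (𝕜 := ℂ) _ _

lemma re_trace_mul_matLog {d : ℕ} {A : Matrix (Fin d) (Fin d) ℂ} (hA : A.IsHermitian) :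
    (A * matLog A).trace.re = -vnEntropy A := by
  rw [matLog, hA.mul_cfc_log, trace_neg, hA.trace_cfc, vnEntropy, dif_pos hA]
  simp [← Complex.ofReal_sum]

lemma relEntropy_eq {d : ℕ} {σ ρ : Matrix (Fin d) (Fin d) ℂ} (hσ : σ.IsHermitian)
    (hρ : ρ.IsHermitian) :
    relEntropy σ ρ = vnEntropy ρ - vnEntropy σ + ((ρ - σ) * matLog ρ).trace.re := by
  have hsplit : σ * matLog ρ = ρ * matLog ρ - (ρ - σ) * matLog ρ := by
    rw [sub_mul]; abel
  rw [relEntropy, hsplit, trace_sub, trace_sub, Complex.sub_re, Complex.sub_re,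
    re_trace_mul_matLog hσ, re_trace_mul_matLog hρ]
  ring

theorem stmt_8_general (d : ℕ) (σ ρ : Matrix (Fin d) (Fin d) ℂ)
    (hσ : σ.PosDef)
    (hρ : ρ.PosDef) :
    relEntropy σ ρ ≤ |vnEntropy σ - vnEntropy ρ| + frobNorm (ρ - σ) * frobNorm (matLog ρ) := by
  have hentropy : vnEntropy ρ - vnEntropy σ ≤ |vnEntropy σ - vnEntropy ρ| :=
    abs_sub_comm (vnEntropy σ) (vnEntropy ρ) ▸ le_abs_self _
  have hcross : ((ρ - σ) * matLog ρ).trace.re ≤ frobNorm (ρ - σ) * frobNorm (matLog ρ) := by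
    simpa only [(hρ.1.sub hσ.1).eq] using
      re_trace_conjTranspose_mul_le_frobNorm_mul (ρ - σ) (matLog ρ)
  rw [relEntropy_eq hσ.1 hρ.1]
  linarith

theorem stmt_8 (d : ℕ) (σ ρ : Matrix (Fin d) (Fin d) ℂ)
    (hσ : σ.PosDef) (hσtr : σ.trace = 1)
    (hρ : ρ.PosDef) (hρtr : ρ.trace = 1) :
    relEntropy σ ρ ≤ |vnEntropy σ - vnEntropy ρ| + frobNorm (ρ - σ) * frobNorm (matLog ρ) :=
  stmt_8_general d σ ρ hσ hρ
end

section
/- (Theorem 2, part (i): essentially exponential convergence of S(ρ̂‖ρ).) Let d ≥ 1, and let ρ : [0,∞) → M_d(ℂ) and ρ̂ : [0,∞) → M_d(ℂ) be functions such that ρ(t) and ρ̂(t) are positive definite d×d density matrices for every t ≥ 0. Suppose there exist constants M > 0 and σ > 0 with ‖ρ̂(t) - ρ(t)‖ ≤ M·e^{-σt} in the Frobenius norm for all t ≥ 0, and a constant D > 0 with ‖ln ρ(t)‖ ≤ D for all t ≥ 0. Then there exist a finite time T > 0 and a constant K > 0 such that |S(ρ̂(t)‖ρ(t))| ≤ K·e^{-σ(1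 - 1/e)t} for all t ≥ T. -/
open Matrix
open scoped ComplexOrder

/-!
Klein's inequality makes both `S(ρ̂‖ρ)` and `S(ρ‖ρ̂)` nonnegative, so
`S(ρ̂‖ρ) ≤ S(ρ̂‖ρ) + S(ρ‖ρ̂) = tr((ρ̂ - ρ)(ln ρ̂ - ln ρ)) ≤ ‖ρ̂ - ρ‖ (‖ln ρ̂‖ + ‖ln ρ‖)`
by Cauchy–Schwarz for the Frobenius inner product. The bound `‖ln ρ‖ ≤ D` keeps the eigenvalues
of `ρ` above `e^{-D}`; by Weyl's perturbation bound those of `ρ̂` stay above `e^{-D}/2` once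
`‖ρ̂ - ρ‖ ≤ e^{-D}/2`, and they are at most `1`, so `‖ln ρ̂‖ ≤ √d (D + ln 2)`. Hence `S(ρ̂‖ρ)`
decays like `e^{-σt}`, which is faster than the claimed rate.
-/

lemma Real.sub_le_mul_sub_log {a b : ℝ} (ha : 0 < a) (hb : 0 < b) :
    a - b ≤ a * (Real.log a - Real.log b) := by
  have h := Real.log_le_sub_one_of_pos (div_pos hb ha)
  rw [Real.log_div hb.ne' ha.ne'] at h
  have hb' : a * (b / a) = b := mul_div_cancel₀ b ha.ne'
  nlinarith [mul_le_mul_of_nonneg_left h ha.le]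

section Frobenius

variable {d : ℕ}

lemma frobNorm_eq_norm_vec (X : Matrix (Fin d) (Fin d) ℂ) :
    frobNorm X = ‖WithLp.toLp 2 (vec X)‖ := by
  rw [frobNorm, ← star_vec_dotProduct_vec, norm_eq_sqrt_re_inner (𝕜 := ℂ),
    EuclideanSpace.inner_eq_star_dotProduct, dotProduct_comm]
  rfl

lemma frobNorm_nonneg (X : Matrix (Fin d) (Fin d) ℂ) : 0 ≤ frobNorm X :=
  Real.sqrt_nonneg _

lemma frobNorm_sub_le (X Y : Matrix (Fin d) (Fin d) ℂ) :
    frobNorm (X - Y) ≤ frobNorm X + frobNorm Y := by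
  simp only [frobNorm_eq_norm_vec, vec_sub, WithLp.toLp_sub]
  exact norm_sub_le _ _

lemma abs_re_trace_conjTranspose_mul_le (X Y : Matrix (Fin d) (Fin d) ℂ) :
    |(Xᴴ * Y).trace.re| ≤ frobNorm X * frobNorm Y := by
  rw [frobNorm_eq_norm_vec, frobNorm_eq_norm_vec, ← star_vec_dotProduct_vec, dotProduct_comm,
    ← EuclideanSpace.inner_eq_star_dotProduct]
  exact (Complex.abs_re_le_norm _).trans (norm_inner_le_norm _ _)

end Frobenius

namespace Matrix

variable {n : Type*} [Fintype n] [DecidableEq n] {A B : Matrix n n ℂ}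

lemma trace_diagonal_mul_diagonal_mul_conjTranspose (a b : n → ℂ) (W : Matrix n n ℂ) :
    (diagonal a * W * diagonal b * Wᴴ).trace = ∑ j, ∑ k, a j * b k * (‖W j k‖ ^ 2 : ℝ) := by
  have entry (j k : n) : (diagonal a * W * diagonal b) j k = a j * W j k * b k := by
    simp [mul_diagonal, diagonal_mul]
  simp only [trace, diag, mul_apply (M := diagonal a * W * diagonal b), entry, conjTranspose_apply,
    Complex.ofReal_pow, ← Complex.mul_conj', RCLike.star_def]
  refine Finset.sum_congr rfl fun j _ => Finset.sum_congr rfl fun k _ => ?_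
  ring

namespace IsHermitian

lemma cfc_id_eq (hA : A.IsHermitian) : hA.cfc id = A := by
  rw [← hA.cfc_eq, cfc_id ℝ A hA.isSelfAdjoint]

lemma cfc_isHermitian (hA : A.IsHermitian) (f : ℝ → ℝ) : (hA.cfc f).IsHermitian := by
  rw [← hA.cfc_eq]
  exact cfc_predicate f A

lemma cfc_mul_cfc (hA : A.IsHermitian) (f g : ℝ → ℝ) :
    hA.cfc f * hA.cfc g = hA.cfc (f * g) := by
  simp only [IsHermitian.cfc, ← map_mul, diagonal_mul_diagonal]
  congr 2
  ext i
  simp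

lemma trace_cfc_s9 (hA : A.IsHermitian) (f : ℝ → ℝ) :
    (hA.cfc f).trace = ∑ i, (f (hA.eigenvalues i) : ℂ) := by
  rw [IsHermitian.cfc, Unitary.conjStarAlgAut_apply, trace_mul_cycle, Unitary.coe_star_mul_self,
    one_mul, trace_diagonal]
  rfl

lemma star_eigenvectorUnitary_mul_apply (hA : A.IsHermitian) (hB : B.IsHermitian) (j k : n) :
    (star (hA.eigenvectorUnitary : Matrix n n ℂ) * hB.eigenvectorUnitary) j k =
      inner ℂ (hA.eigenvectorBasis j) (hB.eigenvectorBasis k) := by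
  simp [mul_apply, EuclideanSpace.inner_eq_star_dotProduct, dotProduct, mul_comm]

lemma trace_cfc_mul_cfc (hA : A.IsHermitian) (hB : B.IsHermitian) (f g : ℝ → ℝ) :
    (hA.cfc f * hB.cfc g).trace = ∑ j, ∑ k, (f (hA.eigenvalues j) * g (hB.eigenvalues k) *
      ‖inner ℂ (hA.eigenvectorBasis j) (hB.eigenvectorBasis k)‖ ^ 2 : ℝ) := by
  set U := (hA.eigenvectorUnitary : Matrix n n ℂ)
  set V := (hB.eigenvectorUnitary : Matrix n n ℂ)
  set Df : Matrix n n ℂ := diagonal (RCLike.ofReal ∘ f ∘ hA.eigenvalues)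
  set Dg : Matrix n n ℂ := diagonal (RCLike.ofReal ∘ g ∘ hB.eigenvalues)
  calc (hA.cfc f * hB.cfc g).trace
      = (U * (Df * (star U * V * Dg * star V))).trace := by
        simp only [IsHermitian.cfc, Unitary.conjStarAlgAut_apply, Matrix.mul_assoc, U, V, Df, Dg]
    _ = (Df * (star U * V) * Dg * (star U * V)ᴴ).trace := by
        rw [trace_mul_comm]
        simp only [← star_eq_conjTranspose, star_mul, star_star, Matrix.mul_assoc]
    _ = _ := by
        rw [trace_diagonal_mul_diagonal_mul_conjTranspose]
        push_cast
        simp [star_eigenvectorUnitary_mul_apply, U, V]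

lemma sum_sq_norm_inner_eigenvectorBasis_left (hA : A.IsHermitian) (hB : B.IsHermitian) (j : n) :
    ∑ k, ‖inner ℂ (hA.eigenvectorBasis j) (hB.eigenvectorBasis k)‖ ^ 2 = 1 := by
  rw [hB.eigenvectorBasis.sum_sq_norm_inner_left, hA.eigenvectorBasis.orthonormal.1 j, one_pow]

lemma sum_sq_norm_inner_eigenvectorBasis_right (hA : A.IsHermitian) (hB : B.IsHermitian) (k : n) :
    ∑ j, ‖inner ℂ (hA.eigenvectorBasis j) (hB.eigenvectorBasis k)‖ ^ 2 = 1 := by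
  rw [hA.eigenvectorBasis.sum_sq_norm_inner_right, hB.eigenvectorBasis.orthonormal.1 k, one_pow]

open scoped MatrixOrder in
lemma algebraMap_le_iff_le_eigenvalues (hA : A.IsHermitian) (r : ℝ) :
    algebraMap ℝ _ r ≤ A ↔ ∀ k, r ≤ hA.eigenvalues k := by
  rw [algebraMap_le_iff_le_spectrum hA.isSelfAdjoint, hA.spectrum_real_eq_range_eigenvalues]
  simp

end IsHermitian

lemma PosSemidef.eigenvalues_le_re_trace (hA : A.PosSemidef) (k : n) :
    hA.isHermitian.eigenvalues k ≤ A.trace.re := by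
  rw [hA.isHermitian.trace_eq_sum_eigenvalues]
  simpa using Finset.single_le_sum (fun j _ => hA.eigenvalues_nonneg j) (Finset.mem_univ k)

/-- Klein's inequality. In the eigenbases `(aⱼ)` of `A` and `(bₖ)` of `B` both sides become sums
weighted by the doubly stochastic overlaps `|⟨aⱼ, bₖ⟩|²`, which reduces it to the scalar
inequality `Real.sub_le_mul_sub_log`. -/
theorem PosDef.re_trace_sub_le (hA : A.PosDef) (hB : B.PosDef) :
    (A - B).trace.re ≤ (A * cfc Real.log A - A * cfc Real.log B).trace.re := by
  set lam := hA.isHermitian.eigenvalues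
  set mu := hB.isHermitian.eigenvalues
  set w : n → n → ℝ := fun j k =>
    ‖inner ℂ (hA.isHermitian.eigenvectorBasis j) (hB.isHermitian.eigenvectorBasis k)‖ ^ 2
  have hrow (j : n) : ∑ k, w j k = 1 :=
    hA.isHermitian.sum_sq_norm_inner_eigenvectorBasis_left hB.isHermitian j
  have hcol (k : n) : ∑ j, w j k = 1 :=
    hA.isHermitian.sum_sq_norm_inner_eigenvectorBasis_right hB.isHermitian k
  have htrA : A.trace.re = ∑ j, ∑ k, lam j * w j k := by
    simp [hA.isHermitian.trace_eq_sum_eigenvalues, ← Finset.mul_sum, hrow, lam]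
  have htrB : B.trace.re = ∑ j, ∑ k, mu k * w j k := by
    rw [Finset.sum_comm]
    simp [hB.isHermitian.trace_eq_sum_eigenvalues, ← Finset.mul_sum, hcol, mu]
  have hAlogA : (A * cfc Real.log A).trace.re = ∑ j, ∑ k, lam j * Real.log (lam j) * w j k := by
    conv_lhs => enter [1, 1, 1]; rw [← hA.isHermitian.cfc_id_eq]
    rw [hA.isHermitian.cfc_eq, IsHermitian.cfc_mul_cfc, IsHermitian.trace_cfc_s9]
    simp [← Finset.mul_sum, hrow, lam]
  have hAlogB : (A * cfc Real.log B).trace.re = ∑ j, ∑ k, lam j * Real.log (mu k) * w j k := by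
    conv_lhs => enter [1, 1, 1]; rw [← hA.isHermitian.cfc_id_eq]
    rw [hB.isHermitian.cfc_eq, IsHermitian.trace_cfc_mul_cfc]
    simp only [Complex.ofReal_re, id, w, lam, mu]
  rw [trace_sub, trace_sub, Complex.sub_re, Complex.sub_re, htrA, htrB, hAlogA, hAlogB,
    ← Finset.sum_sub_distrib, ← Finset.sum_sub_distrib]
  refine Finset.sum_le_sum fun j _ => ?_
  rw [← Finset.sum_sub_distrib, ← Finset.sum_sub_distrib]
  refine Finset.sum_le_sum fun k _ => ?_
  have hjk := Real.sub_le_mul_sub_log (hA.eigenvalues_pos j) (hB.eigenvalues_pos k)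
  have hw : 0 ≤ w j k := sq_nonneg _
  nlinarith

end Matrix

namespace Matrix.IsHermitian

variable {d : ℕ} {A B : Matrix (Fin d) (Fin d) ℂ}

lemma frobNorm_cfc (hA : A.IsHermitian) (f : ℝ → ℝ) :
    frobNorm (hA.cfc f) = √(∑ k, f (hA.eigenvalues k) ^ 2) := by
  rw [frobNorm, (hA.cfc_isHermitian f).eq, cfc_mul_cfc, trace_cfc_s9]
  simp [sq]

lemma abs_le_frobNorm_cfc (hA : A.IsHermitian) (f : ℝ → ℝ) (k : Fin d) :
    |f (hA.eigenvalues k)| ≤ frobNorm (hA.cfc f) := by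
  rw [frobNorm_cfc]
  exact Real.abs_le_sqrt <| Finset.single_le_sum (f := fun k => f (hA.eigenvalues k) ^ 2)
    (fun _ _ => sq_nonneg _) (Finset.mem_univ k)

lemma frobNorm_cfc_le (hA : A.IsHermitian) (f : ℝ → ℝ) {C : ℝ} (hC : 0 ≤ C)
    (hf : ∀ k, |f (hA.eigenvalues k)| ≤ C) : frobNorm (hA.cfc f) ≤ √d * C := by
  rw [frobNorm_cfc, ← Real.sqrt_sq hC, ← Real.sqrt_mul (Nat.cast_nonneg d)]
  refine Real.sqrt_le_sqrt ?_
  calc ∑ k, f (hA.eigenvalues k) ^ 2 ≤ ∑ _k : Fin d, C ^ 2 :=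
        Finset.sum_le_sum fun k _ => sq_le_sq' (abs_le.1 (hf k)).1 (abs_le.1 (hf k)).2
    _ = d * C ^ 2 := by simp

lemma abs_eigenvalues_le_frobNorm (hA : A.IsHermitian) (k : Fin d) :
    |hA.eigenvalues k| ≤ frobNorm A := by
  simpa [hA.cfc_id_eq] using hA.abs_le_frobNorm_cfc id k

open scoped MatrixOrder in
/-- Weyl's perturbation bound, with the operator norm replaced by the larger Frobenius norm. -/
lemma sub_frobNorm_le_eigenvalues (hA : A.IsHermitian) (hB : B.IsHermitian) {c : ℝ}
    (hc : ∀ k, c ≤ hB.eigenvalues k) (k : Fin d) :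
    c - frobNorm (A - B) ≤ hA.eigenvalues k := by
  have hB_ge := (hB.algebraMap_le_iff_le_eigenvalues c).2 hc
  have hAB_ge := ((hA.sub hB).algebraMap_le_iff_le_eigenvalues _).2 fun k =>
    neg_le_of_abs_le ((hA.sub hB).abs_eigenvalues_le_frobNorm k)
  have hA_ge := add_le_add hB_ge hAB_ge
  rw [← map_add, add_sub_cancel, ← sub_eq_add_neg] at hA_ge
  exact (hA.algebraMap_le_iff_le_eigenvalues _).1 hA_ge k

end Matrix.IsHermitian

namespace Matrix.PosDef

variable {d : ℕ} {A B : Matrix (Fin d) (Fin d) ℂ}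

lemma exp_neg_le_eigenvalues (hA : A.PosDef) {D : ℝ}
    (hlog : frobNorm (matLog A) ≤ D) (k : Fin d) :
    Real.exp (-D) ≤ hA.isHermitian.eigenvalues k := by
  have hk : |Real.log (hA.isHermitian.eigenvalues k)| ≤ frobNorm (matLog A) := by
    rw [matLog, hA.isHermitian.cfc_eq]
    exact hA.isHermitian.abs_le_frobNorm_cfc Real.log k
  calc Real.exp (-D) ≤ Real.exp (Real.log (hA.isHermitian.eigenvalues k)) :=
        Real.exp_le_exp.2 (by linarith [neg_abs_le (Real.log (hA.isHermitian.eigenvalues k))])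
    _ = _ := Real.exp_log (hA.eigenvalues_pos k)

lemma frobNorm_matLog_le_of_frobNorm_sub_le (hA : A.PosDef) (htr : A.trace = 1)
    (hB : B.PosDef) {D : ℝ} (hD : 0 ≤ D) (hlogB : frobNorm (matLog B) ≤ D)
    (hAB : frobNorm (A - B) ≤ Real.exp (-D) / 2) :
    frobNorm (matLog A) ≤ √d * (D + Real.log 2) := by
  rw [matLog, hA.isHermitian.cfc_eq]
  refine hA.isHermitian.frobNorm_cfc_le _ (by positivity) fun k => ?_
  have hpos := hA.eigenvalues_pos k
  have hlow : Real.exp (-D) / 2 ≤ hA.isHermitian.eigenvalues k := by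
    linarith [hA.isHermitian.sub_frobNorm_le_eigenvalues hB.isHermitian
      (hB.exp_neg_le_eigenvalues hlogB) k]
  have hup : hA.isHermitian.eigenvalues k ≤ 1 := by
    simpa [htr] using hA.posSemidef.eigenvalues_le_re_trace k
  rw [abs_of_nonpos (Real.log_nonpos hpos.le hup), neg_le]
  calc -(D + Real.log 2) = Real.log (Real.exp (-D) / 2) := by
        rw [Real.log_div (Real.exp_pos _).ne' two_ne_zero, Real.log_exp]; ring
    _ ≤ _ := Real.log_le_log (by positivity) hlow

end Matrix.PosDef

section RelativeEntropy

variable {d : ℕ} {A B : Matrix (Fin d) (Fin d) ℂ}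

lemma relEntropy_nonneg (hA : A.PosDef) (hB : B.PosDef) (htr : A.trace = B.trace) :
    0 ≤ relEntropy A B := by
  have hKlein := hA.re_trace_sub_le hB
  rwa [trace_sub, htr, sub_self, Complex.zero_re] at hKlein

lemma relEntropy_add_relEntropy (A B : Matrix (Fin d) (Fin d) ℂ) :
    relEntropy A B + relEntropy B A = ((A - B) * (matLog A - matLog B)).trace.re := by
  simp only [relEntropy, ← Complex.add_re, ← trace_add]
  congr 2
  noncomm_ring

lemma abs_relEntropy_le (hA : A.PosDef) (hB : B.PosDef) (htr : A.trace = B.trace) :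
    |relEntropy A B| ≤ frobNorm (A - B) * (frobNorm (matLog A) + frobNorm (matLog B)) := by
  rw [abs_of_nonneg (relEntropy_nonneg hA hB htr)]
  calc relEntropy A B ≤ relEntropy A B + relEntropy B A :=
        le_add_of_nonneg_right (relEntropy_nonneg hB hA htr.symm)
    _ = ((A - B)ᴴ * (matLog A - matLog B)).trace.re := by
        rw [relEntropy_add_relEntropy, (hA.isHermitian.sub hB.isHermitian).eq]
    _ ≤ frobNorm (A - B) * frobNorm (matLog A - matLog B) :=
        le_of_abs_le (abs_re_trace_conjTranspose_mul_le _ _)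
    _ ≤ _ := by
        gcongr
        · exact frobNorm_nonneg _
        · exact frobNorm_sub_le _ _

end RelativeEntropy

lemma eventually_mul_exp_neg_mul_le (M : ℝ) {σ ε : ℝ} (hσ : 0 < σ) (hε : 0 < ε) :
    ∀ᶠ t in Filter.atTop, M * Real.exp (-(σ * t)) ≤ ε := by
  have hlim : Filter.Tendsto (fun t => M * Real.exp (-(σ * t))) Filter.atTop (nhds 0) := by
    simpa using (Real.tendsto_exp_neg_atTop_nhds_zero.comp
      (Filter.tendsto_id.const_mul_atTop hσ)).const_mul M
  exact hlim.eventually (ge_mem_nhds hε)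

theorem stmt_9_general (d : ℕ)
    (ρ ρhat : ℝ → Matrix (Fin d) (Fin d) ℂ)
    (hρ : ∀ t : ℝ, 0 ≤ t → (ρ t).PosDef ∧ (ρ t).trace = 1)
    (hρhat : ∀ t : ℝ, 0 ≤ t → (ρhat t).PosDef ∧ (ρhat t).trace = 1)
    (M σ : ℝ) (hM : 0 < M) (hσ : 0 < σ)
    (hconv : ∀ t : ℝ, 0 ≤ t → frobNorm (ρhat t - ρ t) ≤ M * Real.exp (-(σ * t)))
    (D : ℝ) (hD : 0 < D) (hlog : ∀ t : ℝ, 0 ≤ t → frobNorm (matLog (ρ t)) ≤ D) :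
    ∃ T : ℝ, 0 < T ∧ ∃ K : ℝ, 0 < K ∧ ∀ t : ℝ, T ≤ t →
      |relEntropy (ρhat t) (ρ t)| ≤ K * Real.exp (-(σ * (1 - 1 / Real.exp 1) * t)) := by
  obtain ⟨T₀, hT₀⟩ := Filter.eventually_atTop.1
    (eventually_mul_exp_neg_mul_le M hσ (half_pos (Real.exp_pos (-D))))
  refine ⟨max T₀ 1, by positivity, M * (√d * (D + Real.log 2) + D), by positivity, fun t ht => ?_⟩
  have ht0 : 0 ≤ t := by linarith [le_max_right T₀ 1]
  obtain ⟨hρt, htrρ⟩ := hρ t ht0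
  obtain ⟨hρhatt, htrρhat⟩ := hρhat t ht0
  have hclose := (hconv t ht0).trans (hT₀ t (le_of_max_le_left ht))
  have hdecay : Real.exp (-(σ * t)) ≤ Real.exp (-(σ * (1 - 1 / Real.exp 1) * t)) := by
    have he : 0 < 1 / Real.exp 1 := by positivity
    gcongr
    nlinarith [mul_nonneg hσ.le ht0]
  calc |relEntropy (ρhat t) (ρ t)|
      ≤ frobNorm (ρhat t - ρ t) * (frobNorm (matLog (ρhat t)) + frobNorm (matLog (ρ t))) :=
        abs_relEntropy_le hρhatt hρt (htrρhat.trans htrρ.symm)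
    _ ≤ M * Real.exp (-(σ * t)) * (√d * (D + Real.log 2) + D) :=
        mul_le_mul (hconv t ht0)
          (add_le_add
            (hρhatt.frobNorm_matLog_le_of_frobNorm_sub_le htrρhat hρt hD.le (hlog t ht0) hclose)
            (hlog t ht0))
          (add_nonneg (frobNorm_nonneg _) (frobNorm_nonneg _)) (by positivity)
    _ ≤ M * (√d * (D + Real.log 2) + D) * Real.exp (-(σ * (1 - 1 / Real.exp 1) * t)) := by
        rw [mul_right_comm]
        gcongr

theorem stmt_9 (d : ℕ) (hd : 1 ≤ d)
    (ρ ρhat : ℝ → Matrix (Fin d) (Fin d) ℂ)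
    (hρ : ∀ t : ℝ, 0 ≤ t → (ρ t).PosDef ∧ (ρ t).trace = 1)
    (hρhat : ∀ t : ℝ, 0 ≤ t → (ρhat t).PosDef ∧ (ρhat t).trace = 1)
    (M σ : ℝ) (hM : 0 < M) (hσ : 0 < σ)
    (hconv : ∀ t : ℝ, 0 ≤ t → frobNorm (ρhat t - ρ t) ≤ M * Real.exp (-(σ * t)))
    (D : ℝ) (hD : 0 < D) (hlog : ∀ t : ℝ, 0 ≤ t → frobNorm (matLog (ρ t)) ≤ D) :
    ∃ T : ℝ, 0 < T ∧ ∃ K : ℝ, 0 < K ∧ ∀ t : ℝ, T ≤ t →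
      |relEntropy (ρhat t) (ρ t)| ≤ K * Real.exp (-(σ * (1 - 1 / Real.exp 1) * t)) :=
  stmt_9_general d ρ ρhat hρ hρhat M σ hM hσ hconv D hD hlog
end

section
/- (Eigenvalue entropy difference bound via Fannes' lemma.) Let d ≥ 1 and let (λ_1, ..., λ_d) and (μ_1, ..., μ_d) be two probability vectors (nonnegative real numbers each summing to 1, with each entry in [0,1]). Then |∑_{k=1}^{d} λ_k·ln λ_k - ∑_{k=1}^{d} μ_k·ln μ_k| ≤ ∑_{k=1}^{d} (2|λ_k - μ_k| + h(|λ_k - μ_k|)), where h(x) = -x·ln x with h(0) = 0. -/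
lemma stmt_13_aux_le {x y : ℝ} (hy0 : 0 ≤ y) (hx1 : x ≤ 1) (hxy : y ≤ x) :
    x * Real.log x - y * Real.log y ≤ x - y := by
  rcases eq_or_lt_of_le hy0 with h0 | hy
  · have hx0 : 0 ≤ x := le_trans hy0 hxy
    have h1 : Real.log x ≤ 0 := Real.log_nonpos hx0 hx1
    have h2 : x * Real.log x ≤ 0 := mul_nonpos_of_nonneg_of_nonpos hx0 h1
    subst h0
    simpa using by linarith
  · have hx : 0 < x := lt_of_lt_of_le hy hxy
    have h1 : x * Real.log x ≤ y * Real.log x := by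
      have : Real.log x ≤ 0 := Real.log_nonpos (le_of_lt hx) hx1
      nlinarith
    have h2 : Real.log x - Real.log y ≤ x / y - 1 := by
      have := Real.log_le_sub_one_of_pos (show 0 < x / y by positivity)
      rwa [Real.log_div (ne_of_gt hx) (ne_of_gt hy)] at this
    have h3 : y * (Real.log x - Real.log y) ≤ y * (x / y - 1) := by
      exact mul_le_mul_of_nonneg_left h2 hy0
    have h4 : y * (x / y - 1) = x - y := by field_simp
    nlinarith

lemma stmt_13_aux_ge {x y : ℝ} (hy0 : 0 ≤ y) (hxy : y ≤ x) :
    (x - y) * Real.log (x - y) ≤ x * Real.log x - y * Real.log y := by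
  set t := x - y with ht
  rcases eq_or_lt_of_le hxy with h0 | hlt
  · simp [ht, ← h0]
  · have htpos : 0 < t := by simp [ht]; linarith
    have hx : 0 < x := lt_of_le_of_lt hy0 hlt
    have h1 : y * Real.log y ≤ y * Real.log x := by
      rcases eq_or_lt_of_le hy0 with h | h
      · simp [← h]
      · exact mul_le_mul_of_nonneg_left (Real.log_le_log h hxy) hy0
    have h2 : t * Real.log t ≤ t * Real.log x := by
      apply mul_le_mul_of_nonneg_left _ (le_of_lt htpos)
      exact Real.log_le_log htpos (by linarith)
    have h3 : x * Real.log x = y * Real.log x + t * Real.log x := by ring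
    linarith

lemma stmt_13_aux {x y : ℝ} (hx0 : 0 ≤ x) (hx1 : x ≤ 1) (hy0 : 0 ≤ y) (hy1 : y ≤ 1) :
    |x * Real.log x - y * Real.log y| ≤ 2 * |x - y| + Real.negMulLog |x - y| := by
  wlog hxy : y ≤ x generalizing x y
  · have := this hy0 hy1 hx0 hx1 (le_of_not_ge hxy)
    rwa [abs_sub_comm, abs_sub_comm y x] at this
  have habs : |x - y| = x - y := abs_of_nonneg (by linarith)
  rw [habs]
  have ht0 : 0 ≤ x - y := by linarith
  have ht1 : x - y ≤ 1 := by linarith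
  have hnn : 0 ≤ Real.negMulLog (x - y) := Real.negMulLog_nonneg ht0 ht1
  rw [abs_le, Real.negMulLog]
  constructor
  · have := stmt_13_aux_ge hy0 hxy
    nlinarith
  · have := stmt_13_aux_le hy0 hx1 hxy
    rw [Real.negMulLog] at hnn
    linarith

theorem stmt_13 (d : ℕ) (hd : 1 ≤ d) (lam mu : Fin d → ℝ)
    (hlam0 : ∀ k, 0 ≤ lam k) (hlam1 : ∀ k, lam k ≤ 1) (hlamsum : ∑ k, lam k = 1)
    (hmu0 : ∀ k, 0 ≤ mu k) (hmu1 : ∀ k, mu k ≤ 1) (hmusum : ∑ k, mu k = 1) :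
    |(∑ k, lam k * Real.log (lam k)) - ∑ k, mu k * Real.log (mu k)| ≤
      ∑ k, (2 * |lam k - mu k| + Real.negMulLog |lam k - mu k|) := by
  rw [← Finset.sum_sub_distrib]
  calc |∑ k, (lam k * Real.log (lam k) - mu k * Real.log (mu k))|
      ≤ ∑ k, |lam k * Real.log (lam k) - mu k * Real.log (mu k)| :=
        Finset.abs_sum_le_sum_abs _ _
    _ ≤ ∑ k, (2 * |lam k - mu k| + Real.negMulLog |lam k - mu k|) :=
        Finset.sum_le_sum fun k _ =>
          stmt_13_aux (hlam0 k) (hlam1 k) (hmu0 k) (hmu1 k)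
end
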